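/- Let n = p_1^{x_1} p_2^{x_2} ⋯ p_k^{x_k} with p_1, …, p_k distinct primes, all x_i ≥ 1, and k ≥ 3. Let r be an integer with 1 ≤ r < x_2. Let u ∈ Z_n have additive order p_1 and let v ∈ Z_n have additive order p_1^{x_1} p_2^{r} p_3^{x_3} ⋯ p_k^{x_k}. Then the number of vertices of the power graph P(Z_n) that are adjacent to u but not adjacent to v is at least (p_1^{x_1} − 1)(p_2^{x_2} − p_2^{r}) · p_3^{x_3} ⋯ p_{k-1}^{x_{k-1}}. -/

import Mathlib

/-!
In a finite cyclic group `b` is a multiple of `a` iff the order of `b` divides that of `a`,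
and for `d` dividing the group order exactly `d` elements have order dividing `d`.
Put `A = p₁^{x₁}`, `N = p₂^{x₂} p₃^{x₃} ⋯ p_{k-1}^{x_{k-1}}` and
`c = p₂^r p₃^{x₃} ⋯ p_{k-1}^{x_{k-1}}`, so that `v` has order `A c p_k^{x_k}`.
An element `w` whose order divides `A N` but neither `N` nor `A c` has order divisible by `p₁`,
hence is adjacent to `u`; its order is prime to `p_k`, so it is not divisible by the order
`A c p_k^{x_k}` of `v` and does not divide it either, hence `w` is not adjacent to `v`. By inclusion–exclusion there are
`A N - N - A c + c = (A - 1)(N - c)` such elements.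
-/

/-- The power graph of `ZMod n`: distinct `x`, `y` are adjacent iff one is a
positive multiple (i.e. a positive "power" in additive notation) of the other. -/
def powerGraph (n : ℕ) : SimpleGraph (ZMod n) :=
  SimpleGraph.fromRel (fun x y => ∃ m : ℕ, 0 < m ∧ y = m • x)

section FiniteCyclic

variable {G : Type*} [AddCommGroup G] [IsAddCyclic G] [Finite G]

lemma IsAddCyclic.ncard_addOrderOf_dvd (d : ℕ) :
    {g : G | addOrderOf g ∣ d}.ncard = (Nat.card G).gcd d := by
  have hker : {g : G | addOrderOf g ∣ d} = (nsmulAddMonoidHom (α := G) d).ker := by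
    ext g
    simp [addOrderOf_dvd_iff_nsmul_eq_zero]
  rw [hker, ← Nat.card_coe_set_eq, SetLike.coe_sort_coe,
    IsAddCyclic.card_nsmulAddMonoidHom_ker]

lemma IsAddCyclic.mem_zmultiples_iff_addOrderOf_dvd {a b : G} :
    b ∈ AddSubgroup.zmultiples a ↔ addOrderOf b ∣ addOrderOf a := by
  refine ⟨addOrderOf_dvd_of_mem_zmultiples, fun h => ?_⟩
  have hle : AddSubgroup.zmultiples a ≤ (nsmulAddMonoidHom (α := G) (addOrderOf a)).ker :=
    AddSubgroup.zmultiples_le.2 (addOrderOf_nsmul_eq_zero a)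
  have hcard : Nat.card (nsmulAddMonoidHom (α := G) (addOrderOf a)).ker ≤
      Nat.card (AddSubgroup.zmultiples a) := by
    rw [IsAddCyclic.card_nsmulAddMonoidHom_ker, Nat.card_zmultiples,
      Nat.gcd_eq_right (addOrderOf_dvd_natCard a)]
  rw [AddSubgroup.eq_of_le_of_card_ge hle hcard, AddMonoidHom.mem_ker]
  exact addOrderOf_dvd_iff_nsmul_eq_zero.1 h

lemma exists_pos_nsmul_eq_iff_addOrderOf_dvd {a b : G} :
    (∃ m : ℕ, 0 < m ∧ b = m • a) ↔ addOrderOf b ∣ addOrderOf a := by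
  refine ⟨fun ⟨m, _, hb⟩ => hb ▸ addOrderOf_smul_dvd m, fun h => ?_⟩
  obtain ⟨m, rfl⟩ := mem_multiples_iff_mem_zmultiples.2
    (IsAddCyclic.mem_zmultiples_iff_addOrderOf_dvd.2 h)
  exact ⟨m + addOrderOf a, by have := addOrderOf_pos a; omega,
    by rw [add_nsmul, addOrderOf_nsmul_eq_zero, add_zero]⟩

lemma IsAddCyclic.ncard_addOrderOf_dvd_mul_sdiff {a b c : ℕ} (hab : a.Coprime b) (hcb : c ∣ b)
    (habG : a * b ∣ Nat.card G) :
    ({g : G | addOrderOf g ∣ a * b} \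
      ({g | addOrderOf g ∣ b} ∪ {g | addOrderOf g ∣ a * c})).ncard = (a - 1) * (b - c) := by
  have hcard : ∀ d, d ∣ a * b → {g : G | addOrderOf g ∣ d}.ncard = d := fun d hd => by
    rw [IsAddCyclic.ncard_addOrderOf_dvd, Nat.gcd_eq_right (hd.trans habG)]
  have hinter : {g : G | addOrderOf g ∣ b} ∩ {g | addOrderOf g ∣ a * c} =
      {g | addOrderOf g ∣ c} := by
    ext g
    refine ⟨fun ⟨hgb, hgac⟩ => ?_, fun hgc => ⟨hgc.trans hcb, hgc.trans (dvd_mul_left c a)⟩⟩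
    exact (hab.symm.coprime_dvd_left hgb).dvd_of_dvd_mul_left hgac
  have hsub : {g : G | addOrderOf g ∣ b} ∪ {g | addOrderOf g ∣ a * c} ⊆
      {g | addOrderOf g ∣ a * b} := Set.union_subset
    (fun g hg => dvd_mul_of_dvd_right hg a) (fun g hg => hg.trans (mul_dvd_mul_left a hcb))
  have hunion := Set.ncard_union_add_ncard_inter {g : G | addOrderOf g ∣ b}
    {g | addOrderOf g ∣ a * c}
  rw [hinter, hcard b (dvd_mul_left b a), hcard (a * c) (mul_dvd_mul_left a hcb),
    hcard c (hcb.trans (dvd_mul_left b a))] at hunion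
  have hsdiff := Set.ncard_sdiff_add_ncard_of_subset hsub
  rw [hcard _ dvd_rfl] at hsdiff
  have hab0 : a * b ≠ 0 := (Nat.pos_of_dvd_of_pos habG Nat.card_pos).ne'
  have hexpand : (a - 1) * (b - c) + b + a * c = a * b + c := by
    obtain ⟨a, rfl⟩ := Nat.exists_eq_add_one_of_ne_zero (left_ne_zero_of_mul hab0)
    obtain ⟨b, rfl⟩ := Nat.exists_eq_add_of_le (Nat.le_of_dvd
      (Nat.pos_of_ne_zero (right_ne_zero_of_mul hab0)) hcb)
    rw [Nat.add_sub_cancel, Nat.add_sub_cancel_left]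
    ring
  omega

end FiniteCyclic

section PowerGraph

variable {n : ℕ} [NeZero n]

lemma powerGraph_adj_iff {a b : ZMod n} :
    (powerGraph n).Adj a b ↔
      a ≠ b ∧ (addOrderOf b ∣ addOrderOf a ∨ addOrderOf a ∣ addOrderOf b) := by
  simp only [powerGraph, SimpleGraph.fromRel_adj, exists_pos_nsmul_eq_iff_addOrderOf_dvd]

lemma powerGraph_adj_of_not_dvd {u w : ZMod n} {q e N c : ℕ} (hq : q.Prime) (he : e ≠ 0)
    (hu : addOrderOf u = q) (hw : addOrderOf w ∣ q ^ e * N) (hwN : ¬ addOrderOf w ∣ N)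
    (hwc : ¬ addOrderOf w ∣ q ^ e * c) : (powerGraph n).Adj u w := by
  have hqw : q ∣ addOrderOf w := by
    by_contra hqw
    have hcop : (addOrderOf w).Coprime (q ^ e) := (hq.coprime_iff_not_dvd.2 hqw).symm.pow_right e
    exact hwN (hcop.dvd_of_dvd_mul_left hw)
  refine powerGraph_adj_iff.2 ⟨?_, Or.inr (hu ▸ hqw)⟩
  rintro rfl
  exact hwc (hu ▸ (dvd_pow_self q he).mul_right c)

lemma powerGraph_not_adj_of_coprime {v w : ZMod n} {M m P : ℕ} (hMP : M.Coprime P)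
    (hP : P ≠ 1) (hv : addOrderOf v = m * P) (hw : addOrderOf w ∣ M)
    (hwm : ¬ addOrderOf w ∣ m) :
    ¬ (powerGraph n).Adj v w := by
  rw [powerGraph_adj_iff]
  rintro ⟨-, hwv | hvw⟩
  · exact hwm ((hMP.coprime_dvd_left hw).dvd_of_dvd_mul_right (hv ▸ hwv))
  · have hPM : P ∣ M := (dvd_mul_left P m).trans ((hv ▸ hvw).trans hw)
    exact hP (Nat.eq_one_of_dvd_coprimes hMP hPM dvd_rfl)

lemma le_card_powerGraph_adj_and_not_adj {u v : ZMod n} {q e N c P : ℕ} (hq : q.Prime)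
    (he : e ≠ 0) (hqN : (q ^ e).Coprime N) (hcN : c ∣ N) (hMP : (q ^ e * N).Coprime P)
    (hP : P ≠ 1) (hMn : q ^ e * N ∣ n) (hu : addOrderOf u = q)
    (hv : addOrderOf v = q ^ e * c * P) :
    (q ^ e - 1) * (N - c) ≤
      Nat.card {w : ZMod n | (powerGraph n).Adj u w ∧ ¬ (powerGraph n).Adj v w} := by
  rw [← IsAddCyclic.ncard_addOrderOf_dvd_mul_sdiff (G := ZMod n) hqN hcN
    (by rwa [Nat.card_zmod]), Nat.card_coe_set_eq]
  refine Set.ncard_le_ncard ?_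
  rintro w ⟨hw, hwNc⟩
  obtain ⟨hwN, hwc⟩ := not_or.1 hwNc
  exact ⟨powerGraph_adj_of_not_dvd hq he hu hw hwN hwc,
    powerGraph_not_adj_of_coprime hMP hP hv hw hwc⟩

end PowerGraph

section FinProducts

variable {M : Type*} [CommMonoid M] {k : ℕ}

lemma Fin.prod_univ_eq_mul_mul_prod_filter_two_le (hk : 2 ≤ k) (f : Fin k → M) :
    ∏ i, f i = f ⟨0, by omega⟩ * (f ⟨1, by omega⟩ *
      ∏ i ∈ Finset.univ.filter (fun i : Fin k => 2 ≤ (i : ℕ)), f i) := by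
  rw [← Finset.prod_insert (by simp), ← Finset.prod_insert (by simp [Fin.ext_iff])]
  congr 1
  ext i
  simp only [Finset.mem_univ, Finset.mem_insert, Finset.mem_filter, true_and, true_iff,
    Fin.ext_iff]
  omega

lemma Fin.prod_filter_two_le_eq_mul_prod (hk : 3 ≤ k) (f : Fin k → M) :
    ∏ i ∈ Finset.univ.filter (fun i : Fin k => 2 ≤ (i : ℕ)), f i = f ⟨k - 1, by omega⟩ *
      ∏ i ∈ Finset.univ.filter (fun i : Fin k => 2 ≤ (i : ℕ) ∧ (i : ℕ) < k - 1), f i := by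
  rw [← Finset.prod_insert (by simp)]
  congr 1
  ext i
  simp only [Finset.mem_univ, Finset.mem_insert, Finset.mem_filter, true_and, Fin.ext_iff]
  omega

end FinProducts

lemma Nat.coprime_pow_prod_pow_of_notMem {ι : Type*} {p : ι → ℕ} (hp : ∀ i, (p i).Prime)
    (hpinj : Function.Injective p) (x : ι → ℕ) {i : ι} {s : Finset ι} (hi : i ∉ s) :
    (p i ^ x i).Coprime (∏ j ∈ s, p j ^ x j) :=
  Nat.Coprime.prod_right fun j hj =>
    Nat.coprime_pow_primes _ _ (hp i) (hp j) (hpinj.ne (ne_of_mem_of_not_mem hj hi).symm)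

/-- Subcase 1.1 (count two): for `n = p₁^{x₁}⋯p_k^{x_k}` with `k ≥ 3` distinct
primes (indices zero-based) and `1 ≤ r < x₂`, if `u` has order `p₁` and `v` has order
`p₁^{x₁} p₂^r p₃^{x₃} ⋯ p_k^{x_k}`, then the number of vertices adjacent to `u` but
not to `v` is at least `(p₁^{x₁} - 1)(p₂^{x₂} - p₂^r) p₃^{x₃} ⋯ p_{k-1}^{x_{k-1}}`. -/
theorem card_adj_u_not_v_ge (k : ℕ) (hk : 3 ≤ k) (p : Fin k → ℕ)
    (hp : ∀ i, (p i).Prime) (hpinj : Function.Injective p)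
    (x : Fin k → ℕ) (hx : ∀ i, 1 ≤ x i)
    (n : ℕ) (hn : n = ∏ i, p i ^ x i)
    (r : ℕ) (hr2 : r < x ⟨1, by omega⟩)
    (u v : ZMod n) (hu : addOrderOf u = p ⟨0, by omega⟩)
    (hv : addOrderOf v =
      p ⟨0, by omega⟩ ^ x ⟨0, by omega⟩ * p ⟨1, by omega⟩ ^ r *
        ∏ i ∈ Finset.univ.filter (fun i : Fin k => 2 ≤ (i : ℕ)), p i ^ x i) :
    (p ⟨0, by omega⟩ ^ x ⟨0, by omega⟩ - 1) *
        (p ⟨1, by omega⟩ ^ x ⟨1, by omega⟩ - p ⟨1, by omega⟩ ^ r) *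
        (∏ i ∈ Finset.univ.filter (fun i : Fin k => 2 ≤ (i : ℕ) ∧ (i : ℕ) < k - 1),
          p i ^ x i) ≤
      Nat.card {w : ZMod n | (powerGraph n).Adj u w ∧ ¬ (powerGraph n).Adj v w} := by
  have : NeZero n := ⟨hn ▸ Finset.prod_ne_zero_iff.2 fun i _ => pow_ne_zero _ (hp i).ne_zero⟩
  set i₀ : Fin k := ⟨0, by omega⟩
  set i₁ : Fin k := ⟨1, by omega⟩
  set iₖ : Fin k := ⟨k - 1, by omega⟩
  set Q := ∏ i ∈ Finset.univ.filter (fun i : Fin k => 2 ≤ (i : ℕ) ∧ (i : ℕ) < k - 1),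
    p i ^ x i
  have hcop : ∀ i j : Fin k, (i : ℕ) ≠ j → (p i ^ x i).Coprime (p j ^ x j) :=
    fun i j hij => Nat.coprime_pow_primes _ _ (hp i) (hp j) (hpinj.ne (Fin.ne_of_val_ne hij))
  have hcopQ : ∀ i : Fin k, ¬ (2 ≤ (i : ℕ) ∧ (i : ℕ) < k - 1) → (p i ^ x i).Coprime Q :=
    fun i hi => Nat.coprime_pow_prod_pow_of_notMem hp hpinj x (by simpa using hi)
  have hqN : (p i₀ ^ x i₀).Coprime (p i₁ ^ x i₁ * Q) :=
    (hcop i₀ i₁ (by simp [i₀, i₁])).mul_right (hcopQ i₀ (by simp [i₀]))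
  have hMP : (p i₀ ^ x i₀ * (p i₁ ^ x i₁ * Q)).Coprime (p iₖ ^ x iₖ) :=
    (hcop i₀ iₖ (by simp [i₀, iₖ]; omega)).mul_left
      ((hcop i₁ iₖ (by simp [i₁, iₖ]; omega)).mul_left (hcopQ iₖ (by simp [iₖ])).symm)
  have hMn : p i₀ ^ x i₀ * (p i₁ ^ x i₁ * Q) ∣ n := ⟨p iₖ ^ x iₖ, by
    rw [hn, Fin.prod_univ_eq_mul_mul_prod_filter_two_le (by omega),
      Fin.prod_filter_two_le_eq_mul_prod hk]
    ring⟩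
  rw [mul_assoc, Nat.sub_mul (p i₁ ^ x i₁)]
  refine le_card_powerGraph_adj_and_not_adj (hp i₀) (Nat.one_le_iff_ne_zero.1 (hx i₀)) hqN
    (mul_dvd_mul_right (pow_dvd_pow _ hr2.le) Q) hMP
    (Nat.one_lt_pow (Nat.one_le_iff_ne_zero.1 (hx iₖ)) (hp iₖ).one_lt).ne' hMn hu ?_
  rw [hv, Fin.prod_filter_two_le_eq_mul_prod hk]
  ring
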